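/- Let n ≥ 2 and let T be a semistandard Young tableau of shape λ = (λ1, λ2, λ3) (a partition with at most 3 rows) with entries in {1,…,2n}, all of whose columns, read top to bottom, are among the six sequences (1), (1,2), (1,2,3), (1,2n), (1,2,2n−1), (1,2,2n). Let m1 be the number of columns equal to (1,2,2n). Then the reading word of T has dominant restriction if and only if m1 ≤ λ1 − λ2. -/

import Mathlib

/-- Component `j` (0-indexed, `j < n`) of the vector in `ℤ^n` assigned to the letter
`i ∈ {1,…,2n}`: the letter `i` is sent to the standard basis vector `e_i` if `1 ≤ i ≤ n`,
and to `−e_{2n+1−i}` if `n < i ≤ 2n`. -/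
def letterVec (n i j : ℕ) : ℤ :=
  (if i = j + 1 then 1 else 0) - (if i + j = 2 * n then 1 else 0)

/-- Component `j` (0-indexed) of the sum of the vectors assigned to the letters of `w`. -/
def resSum (n : ℕ) (w : List ℕ) (j : ℕ) : ℤ :=
  (w.map fun i => letterVec n i j).sum

/-- A word `w` over `{1,…,2n}` has *dominant restriction* if every partial sum `p` of the
assigned vectors (over prefixes of `w`) satisfies `p 0 ≥ p 1 ≥ ⋯ ≥ p (n-1) ≥ 0`. -/
def DominantRes (n : ℕ) (w : List ℕ) : Prop :=
  ∀ k : ℕ,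
    (∀ j : ℕ, j + 1 < n → resSum n (w.take k) (j + 1) ≤ resSum n (w.take k) j) ∧
    0 ≤ resSum n (w.take k) (n - 1)

/-- A word over the positive integers is a *lattice word* if every prefix contains,
for each `i ≥ 1`, at least as many letters `i` as letters `i+1`. -/
def IsLatticeWord (w : List ℕ) : Prop :=
  ∀ k i : ℕ, 1 ≤ i → (w.take k).count (i + 1) ≤ (w.take k).count i

/-- The entries of row `r` (0-indexed) of `T` lying in the skew shape `lam/nu`,
read from right to left. -/
def skewRowWord (T : ℕ → ℕ → ℕ) (nu lam : ℕ → ℕ) (r : ℕ) : List ℕ :=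
  ((List.range' (nu r) (lam r - nu r)).map (T r)).reverse

/-- The reading word (rows right to left, top row to bottom row) of a skew tableau
whose rows are `0, …, k-1`. -/
def skewReadingWord (T : ℕ → ℕ → ℕ) (nu lam : ℕ → ℕ) (k : ℕ) : List ℕ :=
  ((List.range k).map (skewRowWord T nu lam)).flatten

/-- `T` is a skew semistandard tableau of shape `lam/nu`: entries are positive,
rows weakly increase from left to right, and columns strictly increase from top to bottom.
Rows are indexed `0, 1, 2, …` from the top and columns `0, 1, 2, …` from the left;
the cells of row `r` are the `c` with `nu r ≤ c < lam r`. -/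
def IsSkewSSYT (T : ℕ → ℕ → ℕ) (nu lam : ℕ → ℕ) : Prop :=
  (∀ r c, nu r ≤ c → c < lam r → 1 ≤ T r c) ∧
  (∀ r c c', nu r ≤ c → c ≤ c' → c' < lam r → T r c ≤ T r c') ∧
  (∀ r r' c, r < r' → nu r ≤ c → c < lam r → nu r' ≤ c → c < lam r' → T r c < T r' c)

/-- `T` is a semistandard Young tableau of (straight) shape `lam` with entries
in `{1, …, N}`. -/
def IsSSYT (T : ℕ → ℕ → ℕ) (lam : ℕ → ℕ) (N : ℕ) : Prop :=
  IsSkewSSYT T (fun _ => 0) lam ∧ ∀ r c, c < lam r → T r c ≤ N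

/-- The reading word of a straight-shape tableau with rows `0, …, k-1`. -/
def readingWord (T : ℕ → ℕ → ℕ) (lam : ℕ → ℕ) (k : ℕ) : List ℕ :=
  skewReadingWord T (fun _ => 0) lam k

/-- `T` vanishes outside the skew shape `lam/nu` (a normalization used when counting
tableaux, so that a tableau is determined by its entries inside the shape). -/
def ZeroOutside (T : ℕ → ℕ → ℕ) (nu lam : ℕ → ℕ) : Prop :=
  ∀ r c, c < nu r ∨ lam r ≤ c → T r c = 0

/-- The partition with (at most) three rows `a ≥ b ≥ c`, as a row-length function. -/
def shape3 (a b c : ℕ) : ℕ → ℕ :=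
  fun r => if r = 0 then a else if r = 1 then b else if r = 2 then c else 0

/-- `T` is a Littlewood–Richardson tableau of skew shape `lam/nu` and weight `eta`
(with rows `0, …, k-1`): a skew semistandard tableau whose reading word is a lattice
word and which has exactly `eta i` entries equal to `i + 1` for every `i`. -/
def IsLRTableau (T : ℕ → ℕ → ℕ) (nu lam eta : ℕ → ℕ) (k : ℕ) : Prop :=
  IsSkewSSYT T nu lam ∧ IsLatticeWord (skewReadingWord T nu lam k) ∧
    ∀ i : ℕ, (skewReadingWord T nu lam k).count (i + 1) = eta i

/-- The `n`-symplectic Sundaram condition for a tableau of skew shape `lam/nu`, where `l`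
is the length of the longest column of the weight: for each `i ≤ l/2`, the letter `2i+1`
does not occur strictly below row `n + i` (rows counted `1, 2, …` from the top; in the
0-indexed row `r` this means `r ≥ n + i`). -/
def IsSundaram (n l : ℕ) (T : ℕ → ℕ → ℕ) (nu lam : ℕ → ℕ) : Prop :=
  ∀ i : ℕ, i ≤ l / 2 → ∀ r c, n + i ≤ r → nu r ≤ c → c < lam r → T r c ≠ 2 * i + 1

/-!
The reading word of `T` is `1^λ₁ (2n)^s 2^(λ₂-s) (2n)^m₁ (2n-1)^b 3^a`, where `s` counts the
columns `(1,2n)` and `m₁ + b + a = λ₃ ≤ λ₂ - s`. The conditions of dominant restriction are linear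
inequalities in the partial sum, so by convexity of the dominant chamber they only have to be
checked at the six block boundaries. After the fourth block the partial sum is
`(λ₁ - s - m₁) e₁ + (λ₂ - s) e₂`, which is dominant iff `m₁ ≤ λ₁ - λ₂`; this inequality together
with `λ₃ ≤ λ₂ - s` makes the partial sum dominant at every boundary.
-/

open List

theorem resSum_append (n : ℕ) (u v : List ℕ) (j : ℕ) :
    resSum n (u ++ v) j = resSum n u j + resSum n v j := by
  simp [resSum]

theorem resSum_replicate (n c i j : ℕ) :
    resSum n (replicate c i) j = c * letterVec n i j := by
  simp [resSum, mul_comm]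

theorem letterVec_one {n j : ℕ} (hj : j < n) : letterVec n 1 j = if j = 0 then 1 else 0 := by
  unfold letterVec; split_ifs <;> omega

theorem letterVec_two {n j : ℕ} (hn : 2 ≤ n) (hj : j < n) :
    letterVec n 2 j = if j = 1 then 1 else 0 := by
  unfold letterVec; split_ifs <;> omega

theorem letterVec_three {n j : ℕ} (hn : 2 ≤ n) (hj : j < n) :
    letterVec n 3 j = if j = 2 then 1 else if n = 2 ∧ j = 1 then -1 else 0 := by
  unfold letterVec; split_ifs <;> omega

theorem letterVec_two_mul {n j : ℕ} (hj : j < n) :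
    letterVec n (2 * n) j = if j = 0 then -1 else 0 := by
  unfold letterVec; split_ifs <;> omega

theorem letterVec_two_mul_sub_one {n j : ℕ} (hn : 2 ≤ n) (hj : j < n) :
    letterVec n (2 * n - 1) j = if j = 1 then -1 else 0 := by
  unfold letterVec; split_ifs <;> omega

def IsDominantWeight (n : ℕ) (w : List ℕ) : Prop :=
  (∀ j, j + 1 < n → resSum n w (j + 1) ≤ resSum n w j) ∧ 0 ≤ resSum n w (n - 1)

theorem dominantRes_iff_forall_take {n : ℕ} {w : List ℕ} :
    DominantRes n w ↔ ∀ k, IsDominantWeight n (w.take k) := Iff.rfl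

theorem DominantRes.isDominantWeight {n : ℕ} {w : List ℕ} (h : DominantRes n w) :
    IsDominantWeight n w := by
  simpa only [take_length] using dominantRes_iff_forall_take.1 h w.length

theorem DominantRes.of_append {n : ℕ} {u v : List ℕ} (h : DominantRes n (u ++ v)) :
    DominantRes n u := by
  intro k
  rcases le_total k u.length with hk | hk
  · simpa [take_append_of_le_length hk] using h k
  · simpa [take_of_length_le hk] using h u.length

theorem nonneg_add_mul_of_le {A B c m : ℤ} (hA : 0 ≤ A) (hAc : 0 ≤ A + c * B) (hm : 0 ≤ m)
    (hmc : m ≤ c) : 0 ≤ A + m * B := by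
  rcases le_total 0 B with hB | hB <;> nlinarith

theorem IsDominantWeight.append_replicate_of_le {n c m i : ℕ} {u : List ℕ}
    (h₀ : IsDominantWeight n u) (h₁ : IsDominantWeight n (u ++ replicate c i)) (hm : m ≤ c) :
    IsDominantWeight n (u ++ replicate m i) := by
  have hmc : (m : ℤ) ≤ c := by exact_mod_cast hm
  simp only [IsDominantWeight, resSum_append, resSum_replicate] at h₀ h₁ ⊢
  refine ⟨fun j hj => ?_, ?_⟩
  · have := nonneg_add_mul_of_le (B := letterVec n i j - letterVec n i (j + 1))
      (sub_nonneg.2 (h₀.1 j hj)) (by linarith [h₁.1 j hj]) (Nat.cast_nonneg m) hmc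
    linarith
  · exact nonneg_add_mul_of_le h₀.2 h₁.2 (Nat.cast_nonneg m) hmc

theorem dominantRes_append_replicate_iff {n c i : ℕ} {u : List ℕ} :
    DominantRes n (u ++ replicate c i) ↔
      DominantRes n u ∧ IsDominantWeight n (u ++ replicate c i) := by
  refine ⟨fun h => ⟨h.of_append, h.isDominantWeight⟩, fun ⟨hu, h⟩ k => ?_⟩
  rcases le_total k u.length with hk | hk
  · simpa [take_append_of_le_length hk] using hu k
  · rw [take_append, take_of_length_le hk, take_replicate]
    exact (hu.isDominantWeight).append_replicate_of_le h (min_le_right _ _)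

theorem dominantRes_replicate_iff {n c i : ℕ} :
    DominantRes n (replicate c i) ↔ IsDominantWeight n (replicate c i) := by
  simpa [dominantRes_iff_forall_take, IsDominantWeight, resSum] using
    dominantRes_append_replicate_iff (n := n) (c := c) (i := i) (u := [])

def blockWord (n l s t m b a : ℕ) : List ℕ :=
  replicate l 1 ++ replicate s (2 * n) ++ replicate t 2 ++ replicate m (2 * n) ++
    replicate b (2 * n - 1) ++ replicate a 3

theorem isDominantWeight_blockWord {n : ℕ} (l s t m b a : ℕ) (hn : 2 ≤ n)
    (h₁ : s + t + m ≤ l) (h₂ : a + b + m ≤ t) : IsDominantWeight n (blockWord n l s t m b a) := by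
  refine ⟨fun j hj => ?_, ?_⟩ <;>
  · simp (disch := omega) only [blockWord, resSum_append, resSum_replicate, letterVec_one,
      letterVec_two, letterVec_three, letterVec_two_mul, letterVec_two_mul_sub_one]
    split_ifs <;> first | contradiction | omega

theorem add_le_of_isDominantWeight_blockWord {n l s t m : ℕ} (hn : 2 ≤ n)
    (h : IsDominantWeight n (blockWord n l s t m 0 0)) : s + t + m ≤ l := by
  have h01 := h.1 0 (by omega)
  simp (disch := omega) only [blockWord, resSum_append, resSum_replicate, letterVec_one,
    letterVec_two, letterVec_two_mul] at h01
  norm_num at h01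
  omega

theorem dominantRes_blockWord_iff {n l s t m b a : ℕ} (hn : 2 ≤ n) (h : a + b + m ≤ t) :
    DominantRes n (blockWord n l s t m b a) ↔ s + t + m ≤ l := by
  refine ⟨fun hw => add_le_of_isDominantWeight_blockWord hn ?_, fun hl => ?_⟩
  · unfold blockWord at hw
    simpa [blockWord] using hw.of_append.of_append.isDominantWeight
  · simp only [blockWord, dominantRes_append_replicate_iff, dominantRes_replicate_iff]
    refine ⟨⟨⟨⟨⟨?_, ?_⟩, ?_⟩, ?_⟩, ?_⟩, ?_⟩
    · simpa [blockWord] using isDominantWeight_blockWord l 0 0 0 0 0 hn (by omega) (by omega)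
    · simpa [blockWord] using isDominantWeight_blockWord l s 0 0 0 0 hn (by omega) (by omega)
    · simpa [blockWord] using isDominantWeight_blockWord l s t 0 0 0 hn (by omega) (by omega)
    · simpa [blockWord] using isDominantWeight_blockWord l s t m 0 0 hn (by omega) (by omega)
    · simpa [blockWord] using isDominantWeight_blockWord l s t m b 0 hn (by omega) (by omega)
    · exact isDominantWeight_blockWord l s t m b a hn hl h

theorem List.eq_replicate_count_append_filter_ne {α : Type*} [LinearOrder α] {l : List α} {x : α}
    (hl : l.Pairwise (· ≥ ·)) (hx : ∀ y ∈ l, y ≤ x) :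
    l = replicate (l.count x) x ++ l.filter (· ≠ x) := by
  refine Perm.eq_of_pairwise' hl ?_ ?_
  · refine pairwise_append.2 ⟨pairwise_replicate.2 (Or.inr le_rfl),
      hl.filter _, fun a ha b hb => ?_⟩
    rw [eq_of_mem_replicate ha]
    exact hx b (mem_filter.1 hb).1
  · rw [← filter_eq]
    simpa using (filter_append_perm (fun y => decide (y = x)) l).symm

theorem List.exists_eq_replicate_count_append_replicate {α : Type*} [LinearOrder α]
    {l : List α} {x y : α} (hl : l.Pairwise (· ≥ ·)) (hyx : y ≤ x)
    (hmem : ∀ v ∈ l, v = x ∨ v = y) :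
    ∃ k, l = replicate (l.count x) x ++ replicate k y := by
  refine ⟨(l.filter (· ≠ x)).length, ?_⟩
  rw [← eq_replicate_iff.2 ⟨rfl, fun v hv => ?_⟩]
  · exact eq_replicate_count_append_filter_ne hl fun v hv => by grind
  · simp only [mem_filter, decide_eq_true_eq] at hv
    grind

theorem List.exists_eq_replicate_count_append_replicate_append_replicate {α : Type*}
    [LinearOrder α] {l : List α} {x y z : α} (hl : l.Pairwise (· ≥ ·)) (hyx : y ≤ x)
    (hzy : z ≤ y) (hmem : ∀ v ∈ l, v = x ∨ v = y ∨ v = z) :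
    ∃ b a, l = replicate (l.count x) x ++ replicate b y ++ replicate a z := by
  have hF : ∀ v ∈ l.filter (· ≠ x), v = y ∨ v = z := fun v hv => by
    simp only [mem_filter, decide_eq_true_eq] at hv
    grind
  obtain ⟨a, ha⟩ := exists_eq_replicate_count_append_replicate (hl.filter _) hzy hF
  refine ⟨(l.filter (· ≠ x)).count y, a, ?_⟩
  rw [append_assoc, ← ha]
  exact eq_replicate_count_append_filter_ne hl fun v hv => by grind

@[simp] theorem shape3_zero (a b c : ℕ) : shape3 a b c 0 = a := rfl

@[simp] theorem shape3_one (a b c : ℕ) : shape3 a b c 1 = b := rfl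

@[simp] theorem shape3_two (a b c : ℕ) : shape3 a b c 2 = c := rfl

theorem length_skewRowWord (T : ℕ → ℕ → ℕ) (nu lam : ℕ → ℕ) (r : ℕ) :
    (skewRowWord T nu lam r).length = lam r - nu r := by
  simp [skewRowWord]

theorem mem_skewRowWord {T : ℕ → ℕ → ℕ} {nu lam : ℕ → ℕ} {r x : ℕ} :
    x ∈ skewRowWord T nu lam r ↔ ∃ c, nu r ≤ c ∧ c < lam r ∧ T r c = x := by
  simp only [skewRowWord, mem_reverse, mem_map, mem_range'_1]
  grind

theorem count_skewRowWord (T : ℕ → ℕ → ℕ) (nu lam : ℕ → ℕ) (r x : ℕ) :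
    (skewRowWord T nu lam r).count x =
      ((Finset.Ico (nu r) (lam r)).filter (T r · = x)).card := by
  simp [skewRowWord, Nat.Ico_eq_range', Finset.card_def, Finset.filter_val, count_eq_countP,
    countP_eq_length_filter, filter_map, Function.comp_def, Bool.beq_eq_decide_eq]

theorem IsSkewSSYT.pairwise_skewRowWord {T : ℕ → ℕ → ℕ} {nu lam : ℕ → ℕ}
    (hT : IsSkewSSYT T nu lam) (r : ℕ) : (skewRowWord T nu lam r).Pairwise (· ≥ ·) := by
  rw [skewRowWord, pairwise_reverse, pairwise_map]
  refine (pairwise_lt_range' (s := nu r) (n := lam r - nu r)).imp_of_mem fun ha hb hab => ?_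
  rw [mem_range'_1] at ha hb
  exact hT.2.1 r _ _ ha.1 hab.le (by omega)

/-- Let `n ≥ 2` and let `T` be a semistandard Young tableau of a 3-row
shape `λ = (λ1, λ2, λ3)` with entries in `{1,…,2n}` all of whose columns (read top to
bottom) are among `(1)`, `(1,2)`, `(1,2,3)`, `(1,2n)`, `(1,2,2n−1)`, `(1,2,2n)`, and let
`m1` be the number of columns equal to `(1,2,2n)`. Then the reading word of `T` has
dominant restriction if and only if `m1 ≤ λ1 − λ2`. -/
theorem stmt5 (n : ℕ) (hn : 2 ≤ n) (lam1 lam2 lam3 : ℕ)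
    (h12 : lam2 ≤ lam1) (h23 : lam3 ≤ lam2)
    (T : ℕ → ℕ → ℕ) (hT : IsSSYT T (shape3 lam1 lam2 lam3) (2 * n))
    (hcols : ∀ c : ℕ,
      (c < lam3 →
        T 0 c = 1 ∧ T 1 c = 2 ∧ (T 2 c = 3 ∨ T 2 c = 2 * n - 1 ∨ T 2 c = 2 * n)) ∧
      (lam3 ≤ c → c < lam2 → T 0 c = 1 ∧ (T 1 c = 2 ∨ T 1 c = 2 * n)) ∧
      (lam2 ≤ c → c < lam1 → T 0 c = 1)) :
    DominantRes n (readingWord T (shape3 lam1 lam2 lam3) 3) ↔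
      ((Finset.range lam3).filter fun c => T 2 c = 2 * n).card ≤ lam1 - lam2 := by
  have row0 : skewRowWord T (fun _ => 0) (shape3 lam1 lam2 lam3) 0 = replicate lam1 1 := by
    refine eq_replicate_iff.2 ⟨by simp [length_skewRowWord], fun v hv => ?_⟩
    obtain ⟨c, -, hc, rfl⟩ := mem_skewRowWord.1 hv
    grind [shape3_zero]
  obtain ⟨t, row1⟩ := exists_eq_replicate_count_append_replicate (hT.1.pairwise_skewRowWord 1)
    (x := 2 * n) (y := 2) (by omega) fun v hv => by
      obtain ⟨c, -, hc, rfl⟩ := mem_skewRowWord.1 hv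
      grind [shape3_one]
  obtain ⟨b, a, row2⟩ := exists_eq_replicate_count_append_replicate_append_replicate
    (hT.1.pairwise_skewRowWord 2) (x := 2 * n) (y := 2 * n - 1) (z := 3) (by omega) (by omega)
    fun v hv => by
      obtain ⟨c, -, hc, rfl⟩ := mem_skewRowWord.1 hv
      grind [shape3_two]
  have hlen1 := congrArg length row1
  have hlen2 := congrArg length row2
  simp only [count_skewRowWord, length_skewRowWord, shape3_one, shape3_two,
    ← Finset.range_eq_Ico, length_append, length_replicate] at row1 row2 hlen1 hlen2
  set s := ((Finset.range lam2).filter fun c => T 1 c = 2 * n).card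
  set m1 := ((Finset.range lam3).filter fun c => T 2 c = 2 * n).card
  have hs : s ≤ lam2 - lam3 := by
    rw [← Nat.card_Ico]
    refine Finset.card_le_card fun c hc => ?_
    simp only [Finset.mem_filter, Finset.mem_range, Finset.mem_Ico] at hc ⊢
    grind
  have hread : readingWord T (shape3 lam1 lam2 lam3) 3 = blockWord n lam1 s t m1 b a := by
    simp [readingWord, skewReadingWord, List.range_succ, row0, row1, row2, blockWord]
  rw [hread, dominantRes_blockWord_iff hn (by omega)]
  omega
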